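/- Let n be even with n ≥ 4, let 𝓜 denote the finite set of perfect matchings of the torus grid graph G_n, and define the linear operator H on the real vector space of functions f : 𝓜 → ℝ by (Hf)(C) = d(C)·f(C) − ∑_{C'} m(C, C')·f(C'), where d(C) is the number of flippable pairs of C and m(C, C') is the number of flippable pairs of C whose hQDM move transforms C into C'. Then: (a) H is symmetric with respect to the standard inner product ⟨f, g⟩ = ∑_{C ∈ 𝓜} f(C)·g(C); (b) ⟨f, Hf⟩ ≥ 0 for every f (H is positive semidefinite); and (c) for every Krylov class K, the indicator function of K lies in the kernel of H. -/
import Mathlib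


/-!
Dimer configurations (perfect matchings) on the torus grid graph `G_n` with vertex set
`ZMod n × ZMod n`, where `(v, i)` denotes the edge joining `v` and `v + e i`, with
`e 0 = (1,0)` and `e 1 = (0,1)`.  A plaquette is a point `p : ZMod n × ZMod n`, regarded
as the unit square with corners `p, p+e 0, p+e 1, p+e 0+e 1`.
-/

open scoped Classical
noncomputable section

namespace HQDMT

/-- Vertices (and also plaquettes) of the torus grid graph `G_n`. -/
abbrev VT (n : ℕ) : Type := ZMod n × ZMod n

/-- Edges of `G_n`: `(v, i)` is the edge joining `v` and `v + eT n i`. -/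
abbrev ET (n : ℕ) : Type := VT n × Fin 2

/-- The two unit vectors. -/
def eT (n : ℕ) : Fin 2 → VT n := fun i => if i = 0 then (1, 0) else (0, 1)

/-- The endpoints of an edge. -/
def endsT (n : ℕ) (ed : ET n) : Set (VT n) := {ed.1, ed.1 + eT n ed.2}

/-- `M` is a perfect matching of `G_n`: every vertex lies on exactly one edge of `M`. -/
def IsPMT (n : ℕ) (M : Set (ET n)) : Prop :=
  ∀ w : VT n, ∃! ed : ET n, ed ∈ M ∧ w ∈ endsT n ed

/-- Plaquette `p` hosts a horizontal parallel dimer pair in `M`. -/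
def HostsHT (n : ℕ) (M : Set (ET n)) (p : VT n) : Prop :=
  (p, (0 : Fin 2)) ∈ M ∧ (p + (0, 1), (0 : Fin 2)) ∈ M

/-- Plaquette `p` hosts a vertical parallel dimer pair in `M`. -/
def HostsVT (n : ℕ) (M : Set (ET n)) (p : VT n) : Prop :=
  (p, (1 : Fin 2)) ∈ M ∧ (p + (1, 0), (1 : Fin 2)) ∈ M

/-- Plaquette `p` hosts a parallel pair (horizontal or vertical). -/
def HostsParT (n : ℕ) (M : Set (ET n)) (p : VT n) : Prop := HostsHT n M p ∨ HostsVT n M p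

/-- The four boundary edges of the plaquette `p`. -/
def plaqEdgesT (n : ℕ) (p : VT n) : Set (ET n) :=
  {(p, (0 : Fin 2)), (p + (0, 1), (0 : Fin 2)), (p, (1 : Fin 2)), (p + (1, 0), (1 : Fin 2))}

/-- Flipping the plaquette `p`: the horizontal pair is replaced by the vertical one, or
vice versa (as a set operation, the symmetric difference with the plaquette's boundary). -/
def flipT (n : ℕ) (M : Set (ET n)) (p : VT n) : Set (ET n) := symmDiff M (plaqEdgesT n p)

/-- `{p, p + 2 eT n i}` is a flippable pair of `M`: one of the two plaquettes hosts a
horizontal pair and the other a vertical pair. -/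
def FlipPairT (n : ℕ) (M : Set (ET n)) (p : VT n) (i : Fin 2) : Prop :=
  (HostsHT n M p ∧ HostsVT n M (p + eT n i + eT n i)) ∨
  (HostsVT n M p ∧ HostsHT n M (p + eT n i + eT n i))

/-- The hQDM move at the pair `{p, p + 2 eT n i}`: both plaquettes are flipped. -/
def moveT (n : ℕ) (M : Set (ET n)) (p : VT n) (i : Fin 2) : Set (ET n) :=
  symmDiff M (plaqEdgesT n p ∪ plaqEdgesT n (p + eT n i + eT n i))

/-- Krylov equivalence: the equivalence relation on dimer configurations generated by
hQDM moves at flippable pairs.  The Krylov class of `M` is `{M' | KrylovT n M M'}`. -/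
def KrylovT (n : ℕ) (M M' : Set (ET n)) : Prop :=
  Relation.EqvGen (fun A B => ∃ p i, FlipPairT n A p i ∧ B = moveT n A p i) M M'

/-- The set of flippable pairs of `M`, as unordered pairs `{p, p + 2 eT n i}` of plaquettes. -/
def flipPairsT (n : ℕ) (M : Set (ET n)) : Set (Set (VT n)) :=
  {S : Set (VT n) | ∃ p i, FlipPairT n M p i ∧ S = {p, p + eT n i + eT n i}}

/-- The number of flippable pairs of `M`. -/
def nflipT (n : ℕ) (M : Set (ET n)) : ℕ := (flipPairsT n M).ncard

/-- The plaquette sublattice determined by the parities `a, b` of the two coordinates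
(well-defined for `n` even). -/
def onSubT (n : ℕ) (a b : ZMod 2) (p : VT n) : Prop :=
  ((p.1.val : ZMod 2) = a) ∧ ((p.2.val : ZMod 2) = b)

end HQDMT

namespace HQDMT

/-- `m(C, C')`: the number of flippable pairs of `C` whose hQDM move transforms `C`
into `C'` (counted as unordered pairs of plaquettes). -/
def mcountT (n : ℕ) (C C' : Set (ET n)) : ℕ :=
  ({S : Set (VT n) | ∃ p i, FlipPairT n C p i ∧ S = {p, p + eT n i + eT n i} ∧
      moveT n C p i = C'}).ncard

/-- The hQDM Hamiltonian at the Rokhsar–Kivelson point, in the configuration basis: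
`(H f)(C) = d(C) f(C) - ∑_{C'} m(C, C') f(C')`, where `d(C)` is the number of flippable
pairs of `C`. -/
def HopT (n : ℕ) (f : Set (ET n) → ℝ) (C : Set (ET n)) : ℝ :=
  (nflipT n C : ℝ) * f C - ∑ᶠ C' : Set (ET n), (mcountT n C C' : ℝ) * f C'

/-- The standard inner product on functions on the set of dimer configurations:
`⟨f, g⟩ = ∑_{C ∈ 𝓜} f(C) g(C)`, `𝓜` being the set of perfect matchings of `G_n`. -/
def innerT (n : ℕ) (f g : Set (ET n) → ℝ) : ℝ :=
  ∑ᶠ C ∈ {M : Set (ET n) | IsPMT n M}, f C * g C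

section Aux
variable {n : ℕ}

lemma castNe (h4 : 4 ≤ n) {a b : ℕ} (ha : a < n) (hb : b < n) (hab : a ≠ b) :
    (a : ZMod n) ≠ (b : ZMod n) := by
  intro h
  have h2 := (ZMod.natCast_eq_natCast_iff a b n).mp h
  rw [Nat.ModEq, Nat.mod_eq_of_lt ha, Nat.mod_eq_of_lt hb] at h2
  exact hab h2

lemma one_ne (h4 : 4 ≤ n) : (1 : ZMod n) ≠ 0 := by
  simpa using castNe (n := n) h4 (a := 1) (b := 0) (by omega) (by omega) (by omega)

lemma two_ne (h4 : 4 ≤ n) : (2 : ZMod n) ≠ 0 := by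
  simpa using castNe (n := n) h4 (a := 2) (b := 0) (by omega) (by omega) (by omega)

lemma three_ne (h4 : 4 ≤ n) : (3 : ZMod n) ≠ 0 := by
  simpa using castNe (n := n) h4 (a := 3) (b := 0) (by omega) (by omega) (by omega)

lemma pmUniq {C : Set (ET n)} (hC : IsPMT n C) {w : VT n} {a b : ET n}
    (ha : a ∈ C) (hwa : w ∈ endsT n a) (hb : b ∈ C) (hwb : w ∈ endsT n b) : a = b := by
  obtain ⟨ed, -, h⟩ := hC w
  rw [h a ⟨ha, hwa⟩, h b ⟨hb, hwb⟩]

lemma hostsH_verts_absent {C : Set (ET n)} {p : VT n} (hC : IsPMT n C) (h : HostsHT n C p) :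
    (p, (1 : Fin 2)) ∉ C ∧ (p + (1, 0), (1 : Fin 2)) ∉ C := by
  constructor
  · intro hmem
    have := pmUniq hC h.1 (show p ∈ endsT n (p, 0) by simp [endsT])
      hmem (show p ∈ endsT n (p, 1) by simp [endsT])
    simp at this
  · intro hmem
    have := pmUniq hC h.1 (show p + (1,0) ∈ endsT n (p, 0) by simp [endsT, eT])
      hmem (show p + (1,0) ∈ endsT n (p + (1,0), 1) by simp [endsT])
    simp at this

lemma hostsV_horiz_absent {C : Set (ET n)} {p : VT n} (hC : IsPMT n C) (h : HostsVT n C p) :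
    (p, (0 : Fin 2)) ∉ C ∧ (p + (0, 1), (0 : Fin 2)) ∉ C := by
  constructor
  · intro hmem
    have := pmUniq hC h.1 (show p ∈ endsT n (p, 1) by simp [endsT])
      hmem (show p ∈ endsT n (p, 0) by simp [endsT])
    simp at this
  · intro hmem
    have := pmUniq hC h.1 (show p + (0,1) ∈ endsT n (p, 1) by simp [endsT, eT])
      hmem (show p + (0,1) ∈ endsT n (p + (0,1), 0) by simp [endsT])
    simp at this

lemma isPMT_replace {C : Set (ET n)} (hC : IsPMT n C) {m1 m2 v1 v2 : ET n}
    (hm1 : m1 ∈ C) (hm2 : m2 ∈ C)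
    (hends : endsT n m1 ∪ endsT n m2 = endsT n v1 ∪ endsT n v2)
    (hdisj : ∀ w, w ∈ endsT n v1 → w ∉ endsT n v2) :
    IsPMT n ((C \ {m1, m2}) ∪ {v1, v2}) := by
  intro w
  by_cases hw : w ∈ endsT n m1 ∪ endsT n m2
  · have hw' := hw
    rw [hends] at hw
    have uniq : ∀ ed ∈ (C \ {m1, m2}) ∪ ({v1, v2} : Set (ET n)), w ∈ endsT n ed →
        (ed = v1 ∨ ed = v2) := by
      rintro ed (⟨hedC, hedm⟩ | hed) hwed
      · exfalso
        rcases hw' with h | h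
        · exact hedm (Or.inl (pmUniq hC hedC hwed hm1 h))
        · exact hedm (Or.inr (pmUniq hC hedC hwed hm2 h))
      · exact hed
    rcases hw with hw | hw
    · refine ⟨v1, ⟨Or.inr (Or.inl rfl), hw⟩, ?_⟩
      rintro ed ⟨hed, hwed⟩
      rcases uniq ed hed hwed with rfl | rfl
      · rfl
      · exact absurd hwed (hdisj w hw)
    · refine ⟨v2, ⟨Or.inr (Or.inr rfl), hw⟩, ?_⟩
      rintro ed ⟨hed, hwed⟩
      rcases uniq ed hed hwed with rfl | rfl
      · exact absurd hw (hdisj w hwed)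
      · rfl
  · obtain ⟨ed, ⟨hedC, hwed⟩, huniq⟩ := hC w
    have hedm1 : ed ≠ m1 := fun h => hw (Or.inl (h ▸ hwed))
    have hedm2 : ed ≠ m2 := fun h => hw (Or.inr (h ▸ hwed))
    refine ⟨ed, ⟨Or.inl ⟨hedC, by simp [hedm1, hedm2]⟩, hwed⟩, ?_⟩
    rintro ed' ⟨(⟨h1, -⟩ | h1), hwed'⟩
    · exact huniq ed' ⟨h1, hwed'⟩
    · exfalso
      apply hw
      rw [hends]
      rcases h1 with rfl | rfl
      · exact Or.inl hwed'
      · exact Or.inr hwed'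

lemma flipT_eq_H {C : Set (ET n)} {p : VT n} (hC : IsPMT n C) (h : HostsHT n C p) :
    flipT n C p = (C \ {(p, (0:Fin 2)), (p + (0,1), (0:Fin 2))}) ∪
      {(p, (1:Fin 2)), (p + (1,0), (1:Fin 2))} := by
  have habs := hostsH_verts_absent hC h
  ext ed
  simp only [flipT, Set.mem_symmDiff, plaqEdgesT, Set.mem_insert_iff, Set.mem_singleton_iff,
    Set.mem_union, Set.mem_diff]
  constructor
  · rintro (⟨h1, h2⟩ | ⟨(rfl | rfl | rfl | rfl), h2⟩)
    · exact Or.inl ⟨h1, fun hx => h2 (by tauto)⟩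
    · exact absurd h.1 h2
    · exact absurd h.2 h2
    · exact Or.inr (Or.inl rfl)
    · exact Or.inr (Or.inr rfl)
  · rintro (⟨h1, h2⟩ | (rfl | rfl))
    · refine Or.inl ⟨h1, ?_⟩
      rintro (rfl | rfl | rfl | rfl)
      · exact h2 (Or.inl rfl)
      · exact h2 (Or.inr rfl)
      · exact habs.1 h1
      · exact habs.2 h1
    · exact Or.inr ⟨Or.inr (Or.inr (Or.inl rfl)), habs.1⟩
    · exact Or.inr ⟨Or.inr (Or.inr (Or.inr rfl)), habs.2⟩

lemma flipT_eq_V {C : Set (ET n)} {p : VT n} (hC : IsPMT n C) (h : HostsVT n C p) :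
    flipT n C p = (C \ {(p, (1:Fin 2)), (p + (1,0), (1:Fin 2))}) ∪
      {(p, (0:Fin 2)), (p + (0,1), (0:Fin 2))} := by
  have habs := hostsV_horiz_absent hC h
  ext ed
  simp only [flipT, Set.mem_symmDiff, plaqEdgesT, Set.mem_insert_iff, Set.mem_singleton_iff,
    Set.mem_union, Set.mem_diff]
  constructor
  · rintro (⟨h1, h2⟩ | ⟨(rfl | rfl | rfl | rfl), h2⟩)
    · exact Or.inl ⟨h1, fun hx => h2 (by tauto)⟩
    · exact Or.inr (Or.inl rfl)
    · exact Or.inr (Or.inr rfl)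
    · exact absurd h.1 h2
    · exact absurd h.2 h2
  · rintro (⟨h1, h2⟩ | (rfl | rfl))
    · refine Or.inl ⟨h1, ?_⟩
      rintro (rfl | rfl | rfl | rfl)
      · exact habs.1 h1
      · exact habs.2 h1
      · exact h2 (Or.inl rfl)
      · exact h2 (Or.inr rfl)
    · exact Or.inr ⟨Or.inl rfl, habs.1⟩
    · exact Or.inr ⟨Or.inr (Or.inl rfl), habs.2⟩

lemma isPMT_flipT (h4 : 4 ≤ n) {C : Set (ET n)} {p : VT n} (hC : IsPMT n C)
    (hp : HostsParT n C p) : IsPMT n (flipT n C p) := by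
  have h10 := one_ne h4
  rcases hp with h | h
  · rw [flipT_eq_H hC h]
    apply isPMT_replace hC h.1 h.2
    · obtain ⟨x, y⟩ := p
      ext w
      simp [endsT, eT, Prod.mk_add_mk]
      tauto
    · obtain ⟨x, y⟩ := p
      intro w hw hw'
      simp [endsT, eT, Prod.mk_add_mk] at hw hw'
      rcases hw with rfl | rfl <;> rcases hw' with h2 | h2 <;>
        simp [Prod.mk.injEq, left_eq_add, add_eq_left, h10] at h2
  · rw [flipT_eq_V hC h]
    apply isPMT_replace hC h.1 h.2
    · obtain ⟨x, y⟩ := p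
      ext w
      simp [endsT, eT, Prod.mk_add_mk]
      tauto
    · obtain ⟨x, y⟩ := p
      intro w hw hw'
      simp [endsT, eT, Prod.mk_add_mk] at hw hw'
      rcases hw with rfl | rfl <;> rcases hw' with h2 | h2 <;>
        simp [Prod.mk.injEq, left_eq_add, add_eq_left, h10] at h2

end Aux

section Aux2
variable {n : ℕ}

lemma one_ne_two (h4 : 4 ≤ n) : (1 : ZMod n) ≠ 2 := by
  simpa using castNe (n := n) h4 (a := 1) (b := 2) (by omega) (by omega) (by omega)

lemma one_ne_three (h4 : 4 ≤ n) : (1 : ZMod n) ≠ 3 := by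
  simpa using castNe (n := n) h4 (a := 1) (b := 3) (by omega) (by omega) (by omega)

lemma fin_two_cases (i : Fin 2) : i = 0 ∨ i = 1 := by
  fin_cases i
  · exact Or.inl rfl
  · exact Or.inr rfl

lemma eT_sq_0 (x y : ZMod n) : ((x,y) : VT n) + eT n 0 + eT n 0 = (x + 2, y) := by
  simp [eT, Prod.ext_iff]
  ring

lemma eT_sq_1 (x y : ZMod n) : ((x,y) : VT n) + eT n 1 + eT n 1 = (x, y + 2) := by
  simp [eT, Prod.ext_iff]
  ring

lemma plaq_disjoint (h4 : 4 ≤ n) (p : VT n) (i : Fin 2) :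
    Disjoint (plaqEdgesT n p) (plaqEdgesT n (p + eT n i + eT n i)) := by
  have h10 := one_ne h4
  have h20 := two_ne h4
  have h30 := three_ne h4
  have h12 := one_ne_two h4
  have h13 := one_ne_three h4
  obtain ⟨x, y⟩ := p
  rw [Set.disjoint_left]
  rcases fin_two_cases i with rfl | rfl <;>
    [rw [eT_sq_0]; rw [eT_sq_1]] <;>
    intro ed h1 h2 <;>
    simp only [plaqEdgesT, Set.mem_insert_iff, Set.mem_singleton_iff] at h1 h2 <;>
    rcases h1 with rfl | rfl | rfl | rfl <;>
    simp_all [Prod.ext_iff, Prod.mk_add_mk, add_assoc, left_eq_add, add_eq_left,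
      add_right_inj, two_add_one_eq_three, one_add_one_eq_two]

lemma moveT_eq (h4 : 4 ≤ n) (C : Set (ET n)) (p : VT n) (i : Fin 2) :
    moveT n C p i = flipT n (flipT n C p) (p + eT n i + eT n i) := by
  have hd := Set.disjoint_left.mp (plaq_disjoint h4 p i)
  ext ed
  simp only [moveT, flipT, Set.mem_symmDiff, Set.mem_union]
  have := fun h : ed ∈ plaqEdgesT n p => hd h
  tauto

lemma mem_flipT_out {C : Set (ET n)} {p : VT n} {ed : ET n} (h : ed ∉ plaqEdgesT n p) :
    ed ∈ flipT n C p ↔ ed ∈ C := by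
  simp [flipT, Set.mem_symmDiff, h]

lemma isPMT_moveT (h4 : 4 ≤ n) {C : Set (ET n)} {p : VT n} {i : Fin 2} (hC : IsPMT n C)
    (hf : FlipPairT n C p i) : IsPMT n (moveT n C p i) := by
  have hd := plaq_disjoint h4 p i
  rw [moveT_eq h4]
  have hp : HostsParT n C p := by rcases hf with ⟨h, -⟩ | ⟨h, -⟩; exacts [Or.inl h, Or.inr h]
  have hq : HostsParT n (flipT n C p) (p + eT n i + eT n i) := by
    have htr : ∀ ed ∈ plaqEdgesT n (p + eT n i + eT n i), (ed ∈ flipT n C p ↔ ed ∈ C) :=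
      fun ed hed => mem_flipT_out (fun h => (Set.disjoint_left.mp hd h) hed)
    rcases hf with ⟨-, h⟩ | ⟨-, h⟩
    · exact Or.inr ⟨(htr _ (by simp [plaqEdgesT])).mpr h.1, (htr _ (by simp [plaqEdgesT])).mpr h.2⟩
    · exact Or.inl ⟨(htr _ (by simp [plaqEdgesT])).mpr h.1, (htr _ (by simp [plaqEdgesT])).mpr h.2⟩
  exact isPMT_flipT h4 (isPMT_flipT h4 hC hp) hq

lemma moveT_involutive (C : Set (ET n)) (p : VT n) (i : Fin 2) :
    moveT n (moveT n C p i) p i = C := by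
  rw [moveT, moveT, symmDiff_symmDiff_cancel_right]

lemma flipPair_moveT (h4 : 4 ≤ n) {C : Set (ET n)} {p : VT n} {i : Fin 2} (hC : IsPMT n C)
    (hf : FlipPairT n C p i) : FlipPairT n (moveT n C p i) p i := by
  have hmem : ∀ ed ∈ plaqEdgesT n p ∪ plaqEdgesT n (p + eT n i + eT n i),
      (ed ∈ moveT n C p i ↔ ed ∉ C) := by
    intro ed hed
    simp [moveT, Set.mem_symmDiff, hed]
  rcases hf with ⟨hH, hV⟩ | ⟨hV, hH⟩
  · have haH := hostsH_verts_absent hC hH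
    have haV := hostsV_horiz_absent hC hV
    exact Or.inr ⟨⟨(hmem _ (Or.inl (by simp [plaqEdgesT]))).mpr haH.1,
        (hmem _ (Or.inl (by simp [plaqEdgesT]))).mpr haH.2⟩,
      ⟨(hmem _ (Or.inr (by simp [plaqEdgesT]))).mpr haV.1,
        (hmem _ (Or.inr (by simp [plaqEdgesT]))).mpr haV.2⟩⟩
  · have haV := hostsV_horiz_absent hC hV
    have haH := hostsH_verts_absent hC hH
    exact Or.inl ⟨⟨(hmem _ (Or.inl (by simp [plaqEdgesT]))).mpr haV.1,
        (hmem _ (Or.inl (by simp [plaqEdgesT]))).mpr haV.2⟩,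
      ⟨(hmem _ (Or.inr (by simp [plaqEdgesT]))).mpr haH.1,
        (hmem _ (Or.inr (by simp [plaqEdgesT]))).mpr haH.2⟩⟩

end Aux2

section Aux3
variable {n : ℕ}

lemma pair_eq_cases (h4 : 4 ≤ n) {p p' : VT n} {i i' : Fin 2}
    (h : ({p, p + eT n i + eT n i} : Set (VT n)) = {p', p' + eT n i' + eT n i'}) :
    i = i' ∧ (p = p' ∨ (p = p' + eT n i' + eT n i' ∧ p' = p + eT n i + eT n i)) := by
  have h20 := two_ne h4
  obtain ⟨x, y⟩ := p
  obtain ⟨x', y'⟩ := p'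
  have hmem1 : ((x', y') : VT n) ∈ ({(x,y), (x,y) + eT n i + eT n i} : Set (VT n)) := by
    rw [h]; exact Or.inl rfl
  have hmem2 : ((x', y') : VT n) + eT n i' + eT n i' ∈
      ({(x,y), (x,y) + eT n i + eT n i} : Set (VT n)) := by
    rw [h]; exact Or.inr rfl
  have hmem3 : ((x, y) : VT n) ∈ ({(x',y'), (x',y') + eT n i' + eT n i'} : Set (VT n)) := by
    rw [← h]; exact Or.inl rfl
  rcases fin_two_cases i with rfl | rfl <;> rcases fin_two_cases i' with rfl | rfl <;>
    simp only [eT_sq_0, eT_sq_1, Set.mem_insert_iff, Set.mem_singleton_iff] at hmem1 hmem2 hmem3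
  · simp only [eT_sq_0]
    refine ⟨by trivial, ?_⟩
    rcases hmem1 with h1 | h1 <;> rw [Prod.mk.injEq] at h1 <;> obtain ⟨rfl, rfl⟩ := h1
    · exact Or.inl rfl
    · refine Or.inr ⟨?_, rfl⟩
      rcases hmem3 with h3 | h3
      · simp_all [Prod.ext_iff, left_eq_add]
      · exact h3
  · exfalso
    rcases hmem1 with h1 | h1 <;> rw [Prod.mk.injEq] at h1 <;> obtain ⟨rfl, rfl⟩ := h1
    · rcases hmem2 with h2 | h2 <;>
        simp_all [Prod.ext_iff, left_eq_add, add_eq_left, add_right_inj]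
    · rcases hmem3 with h3 | h3 <;>
        simp_all [Prod.ext_iff, left_eq_add, add_eq_left, add_right_inj]
  · exfalso
    rcases hmem1 with h1 | h1 <;> rw [Prod.mk.injEq] at h1 <;> obtain ⟨rfl, rfl⟩ := h1
    · rcases hmem2 with h2 | h2 <;>
        simp_all [Prod.ext_iff, left_eq_add, add_eq_left, add_right_inj]
    · rcases hmem3 with h3 | h3 <;>
        simp_all [Prod.ext_iff, left_eq_add, add_eq_left, add_right_inj]
  · simp only [eT_sq_1]
    refine ⟨by trivial, ?_⟩
    rcases hmem1 with h1 | h1 <;> rw [Prod.mk.injEq] at h1 <;> obtain ⟨rfl, rfl⟩ := h1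
    · exact Or.inl rfl
    · refine Or.inr ⟨?_, rfl⟩
      rcases hmem3 with h3 | h3
      · simp_all [Prod.ext_iff, left_eq_add]
      · exact h3

lemma moveT_welldef (h4 : 4 ≤ n) (C : Set (ET n)) {p p' : VT n} {i i' : Fin 2}
    (h : ({p, p + eT n i + eT n i} : Set (VT n)) = {p', p' + eT n i' + eT n i'}) :
    moveT n C p i = moveT n C p' i' := by
  obtain ⟨rfl, hc⟩ := pair_eq_cases h4 h
  rcases hc with rfl | ⟨h1, h2⟩
  · rfl
  · rw [moveT, moveT, ← h2, ← h1, Set.union_comm]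
end Aux3

section Aux4
variable {n : ℕ}

/-- The result of the hQDM move at a flippable pair (as a set of plaquettes). -/
def resT (n : ℕ) (C : Set (ET n)) (S : Set (VT n)) : Set (ET n) :=
  if h : ∃ p i, FlipPairT n C p i ∧ S = {p, p + eT n i + eT n i}
  then moveT n C h.choose h.choose_spec.choose else ∅

lemma resT_spec (h4 : 4 ≤ n) {C : Set (ET n)} {S : Set (VT n)} {p : VT n} {i : Fin 2}
    (hf : FlipPairT n C p i) (hS : S = {p, p + eT n i + eT n i}) :
    resT n C S = moveT n C p i := by
  have hex : ∃ p' i', FlipPairT n C p' i' ∧ S = {p', p' + eT n i' + eT n i'} := ⟨p, i, hf, hS⟩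
  simp only [resT, dif_pos hex]
  obtain ⟨hf', hS'⟩ := hex.choose_spec.choose_spec
  exact moveT_welldef h4 C (hS'.symm.trans hS)

lemma mcount_rel {C C' : Set (ET n)} (h : mcountT n C C' ≠ 0) :
    ∃ p i, FlipPairT n C p i ∧ moveT n C p i = C' := by
  have hne := Set.nonempty_of_ncard_ne_zero h
  obtain ⟨S, p, i, hf, -, hmv⟩ := hne
  exact ⟨p, i, hf, hmv⟩

lemma mcount_zero (h4 : 4 ≤ n) {C C' : Set (ET n)} (hC : IsPMT n C) (h : ¬ IsPMT n C') :
    mcountT n C C' = 0 := by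
  rw [mcountT]
  convert Set.ncard_empty (Set (VT n))
  ext S
  simp only [Set.mem_setOf_eq, Set.mem_empty_iff_false, iff_false, not_exists]
  rintro p i ⟨hf, -, hmv⟩
  exact h (hmv ▸ isPMT_moveT h4 hC hf)

lemma mcount_symm (h4 : 4 ≤ n) {C C' : Set (ET n)} (hC : IsPMT n C) (hC' : IsPMT n C') :
    mcountT n C C' = mcountT n C' C := by
  have key : ∀ A B : Set (ET n), IsPMT n A →
      {S : Set (VT n) | ∃ p i, FlipPairT n A p i ∧ S = {p, p + eT n i + eT n i} ∧
        moveT n A p i = B} ⊆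
      {S : Set (VT n) | ∃ p i, FlipPairT n B p i ∧ S = {p, p + eT n i + eT n i} ∧
        moveT n B p i = A} := by
    rintro A B hA S ⟨p, i, hf, hS, rfl⟩
    exact ⟨p, i, flipPair_moveT h4 hA hf, hS, moveT_involutive A p i⟩
  rw [mcountT, mcountT]
  exact congrArg Set.ncard (Set.Subset.antisymm (key C C' hC) (key C' C hC'))

variable [NeZero n]

lemma nflip_eq_sum (h4 : 4 ≤ n) (C : Set (ET n)) :
    nflipT n C = ∑ C' : Set (ET n), mcountT n C C' := by
  classical
  have hfin : (flipPairsT n C).Finite := Set.toFinite _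
  have hm : ∀ C' : Set (ET n),
      {S : Set (VT n) | ∃ p i, FlipPairT n C p i ∧ S = {p, p + eT n i + eT n i} ∧
          moveT n C p i = C'}
        = ↑(hfin.toFinset.filter (fun S => resT n C S = C')) := by
    intro C'
    ext S
    simp only [Set.mem_setOf_eq, Finset.coe_filter, Set.Finite.mem_toFinset, flipPairsT]
    constructor
    · rintro ⟨p, i, hf, hS, hmv⟩
      exact ⟨⟨p, i, hf, hS⟩, by rw [resT_spec h4 hf hS, hmv]⟩
    · rintro ⟨⟨p, i, hf, hS⟩, hres⟩
      exact ⟨p, i, hf, hS, by rw [← resT_spec h4 hf hS, hres]⟩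
  have hcard : nflipT n C = hfin.toFinset.card := by
    rw [nflipT, Set.ncard_eq_toFinset_card _ hfin]
  rw [hcard, Finset.card_eq_sum_card_fiberwise
    (f := fun S => resT n C S) (t := Finset.univ) (fun x _ => Finset.mem_univ _)]
  refine Finset.sum_congr rfl fun C' _ => ?_
  rw [mcountT, hm C', Set.ncard_coe_finset]
end Aux4

/-- For `n` even, `n ≥ 4`, the RK-point hQDM Hamiltonian `H` is
(a) symmetric, (b) positive semidefinite, and (c) kills the indicator function of every
Krylov class. -/
theorem RK_hamiltonian_symmetric_psd_kernel (n : ℕ) (hn : Even n) (h4 : 4 ≤ n) :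
    (∀ f g : Set (ET n) → ℝ, innerT n f (HopT n g) = innerT n (HopT n f) g) ∧
    (∀ f : Set (ET n) → ℝ, 0 ≤ innerT n f (HopT n f)) ∧
    (∀ M : Set (ET n), IsPMT n M → ∀ C : Set (ET n), IsPMT n C →
      HopT n (fun C' => if KrylovT n M C' then (1 : ℝ) else 0) C = 0) := by
  haveI : NeZero n := ⟨by omega⟩
  classical
  set P : Finset (Set (ET n)) := Finset.univ.filter (IsPMT n) with hP
  have hPmem : ∀ C : Set (ET n), C ∈ P ↔ IsPMT n C := by
    intro C; simp [hP]
  have hset : {M : Set (ET n) | IsPMT n M} = ↑P := by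
    ext C; simp [hP]
  have hinner : ∀ f g : Set (ET n) → ℝ, innerT n f g = ∑ C ∈ P, f C * g C := by
    intro f g; rw [innerT, hset, finsum_mem_coe_finset]
  have hHop : ∀ (f : Set (ET n) → ℝ) (C : Set (ET n)), IsPMT n C → HopT n f C =
      (nflipT n C : ℝ) * f C - ∑ C' ∈ P, (mcountT n C C' : ℝ) * f C' := by
    intro f C hC
    rw [HopT, finsum_eq_sum_of_fintype]
    congr 1
    exact (Finset.sum_subset (Finset.subset_univ P) (fun C' _ hC' => by
      rw [mcount_zero h4 hC (fun hpm => hC' ((hPmem C').mpr hpm)), Nat.cast_zero,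
        zero_mul])).symm
  have hdP : ∀ C ∈ P, (nflipT n C : ℝ) = ∑ C' ∈ P, (mcountT n C C' : ℝ) := by
    intro C hC
    rw [nflip_eq_sum h4 C, Nat.cast_sum]
    exact (Finset.sum_subset (Finset.subset_univ P) (fun C' _ hC' => by
      rw [mcount_zero h4 ((hPmem C).mp hC) (fun hpm => hC' ((hPmem C').mpr hpm)),
        Nat.cast_zero])).symm
  have hswap : ∀ F : Set (ET n) → Set (ET n) → ℝ,
      ∑ C ∈ P, ∑ C' ∈ P, (mcountT n C C' : ℝ) * F C C'
        = ∑ C ∈ P, ∑ C' ∈ P, (mcountT n C C' : ℝ) * F C' C := by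
    intro F
    rw [Finset.sum_comm]
    refine Finset.sum_congr rfl fun C' hC' => Finset.sum_congr rfl fun C hC => ?_
    rw [mcount_symm h4 ((hPmem _).mp hC) ((hPmem _).mp hC')]
  have expand1 : ∀ f g : Set (ET n) → ℝ, ∑ C ∈ P, f C * HopT n g C
      = ∑ C ∈ P, (nflipT n C : ℝ) * (f C * g C)
        - ∑ C ∈ P, ∑ C' ∈ P, (mcountT n C C' : ℝ) * (f C * g C') := by
    intro f g
    rw [← Finset.sum_sub_distrib]
    refine Finset.sum_congr rfl fun C hC => ?_
    rw [hHop g C ((hPmem C).mp hC), mul_sub, Finset.mul_sum]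
    congr 1
    · ring
    · exact Finset.sum_congr rfl fun C' _ => by ring
  have expand2 : ∀ f g : Set (ET n) → ℝ, ∑ C ∈ P, HopT n f C * g C
      = ∑ C ∈ P, (nflipT n C : ℝ) * (f C * g C)
        - ∑ C ∈ P, ∑ C' ∈ P, (mcountT n C C' : ℝ) * (f C' * g C) := by
    intro f g
    rw [← Finset.sum_sub_distrib]
    refine Finset.sum_congr rfl fun C hC => ?_
    rw [hHop f C ((hPmem C).mp hC), sub_mul, Finset.sum_mul]
    congr 1
    · ring
    · exact Finset.sum_congr rfl fun C' _ => by ring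
  refine ⟨?_, ?_, ?_⟩
  · -- (a) symmetry
    intro f g
    rw [hinner, hinner, expand1 f g, expand2 f g]
    congr 1
    exact (hswap (fun C C' => f C * g C')).trans
      (Finset.sum_congr rfl fun C _ => Finset.sum_congr rfl fun C' _ => by ring)
  · -- (b) positive semidefiniteness
    intro f
    have hE : innerT n f (HopT n f)
        = ∑ C ∈ P, ∑ C' ∈ P, (mcountT n C C' : ℝ) * (f C * f C)
          - ∑ C ∈ P, ∑ C' ∈ P, (mcountT n C C' : ℝ) * (f C * f C') := by
      rw [hinner, expand1 f f]
      congr 1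
      refine Finset.sum_congr rfl fun C hC => ?_
      rw [hdP C hC, Finset.sum_mul]
    have hs1 := hswap (fun C C' => f C * f C)
    have hs2 := hswap (fun C C' => f C * f C')
    have hQ : ∑ C ∈ P, ∑ C' ∈ P, (mcountT n C C' : ℝ) * (f C - f C')^2
        = (∑ C ∈ P, ∑ C' ∈ P, (mcountT n C C' : ℝ) * (f C * f C))
          + (∑ C ∈ P, ∑ C' ∈ P, (mcountT n C C' : ℝ) * (f C' * f C'))
          - (∑ C ∈ P, ∑ C' ∈ P, (mcountT n C C' : ℝ) * (f C * f C'))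
          - (∑ C ∈ P, ∑ C' ∈ P, (mcountT n C C' : ℝ) * (f C' * f C)) := by
      rw [← Finset.sum_add_distrib, ← Finset.sum_sub_distrib, ← Finset.sum_sub_distrib]
      refine Finset.sum_congr rfl fun C _ => ?_
      rw [← Finset.sum_add_distrib, ← Finset.sum_sub_distrib, ← Finset.sum_sub_distrib]
      exact Finset.sum_congr rfl fun C' _ => by ring
    have hQnn : 0 ≤ ∑ C ∈ P, ∑ C' ∈ P, (mcountT n C C' : ℝ) * (f C - f C')^2 :=
      Finset.sum_nonneg fun C _ => Finset.sum_nonneg fun C' _ =>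
        mul_nonneg (Nat.cast_nonneg _) (sq_nonneg _)
    nlinarith [hE, hs1, hs2, hQ, hQnn]
  · -- (c) kernel
    intro M hM C hC
    rw [HopT, finsum_eq_sum_of_fintype]
    have hcongr : ∀ C' : Set (ET n),
        (mcountT n C C' : ℝ) * (if KrylovT n M C' then (1:ℝ) else 0)
          = (mcountT n C C' : ℝ) * (if KrylovT n M C then (1:ℝ) else 0) := by
      intro C'
      by_cases h0 : mcountT n C C' = 0
      · rw [h0]; simp
      · obtain ⟨p, i, hf, hmv⟩ := mcount_rel h0
        have hrel : KrylovT n M C' ↔ KrylovT n M C := by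
          have hstep : Relation.EqvGen
              (fun A B => ∃ p i, FlipPairT n A p i ∧ B = moveT n A p i) C C' :=
            Relation.EqvGen.rel _ _ ⟨p, i, hf, hmv.symm⟩
          constructor
          · intro h
            exact Relation.EqvGen.trans _ _ _ h (Relation.EqvGen.symm _ _ hstep)
          · intro h
            exact Relation.EqvGen.trans _ _ _ h hstep
        rw [if_congr hrel rfl rfl]
    rw [Finset.sum_congr rfl (fun C' _ => hcongr C'), ← Finset.sum_mul]
    have hd : (nflipT n C : ℝ) = ∑ C' : Set (ET n), (mcountT n C C' : ℝ) := by
      rw [nflip_eq_sum h4 C, Nat.cast_sum]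
    rw [hd]
    ring

end HQDMT
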